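/- arXiv:1010.2481 — 2 statements merged into one kernel-verified Lean document; each statement's English description precedes it below -/
import Mathlib

section
/- The Poisson bracket of the generating-function-induced extension with the constraint: for any smooth f(Q,Π) depending on phase space only through Q_I = e^{φ̂_I} q_I and Π_I = e^{−φ̂_I} π_I, one has {f, C_J} = 0 where C_J = π_φ^J − (π_J·q_J − ⟨π·q⟩). -/
/-- Extended phase space: (q, p, φ, π_φ). -/
abbrev ExtPhase (n d : ℕ) :=
  ((Fin n → Fin d → ℝ) × (Fin n → Fin d → ℝ)) × ((Fin n → ℝ) × (Fin n → ℝ))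

/-- Canonical Poisson bracket on the extended phase space: the (q,p) part plus
the (φ,π_φ) part. -/
noncomputable def extPB {n d : ℕ} (F G : ExtPhase n d → ℝ) (x : ExtPhase n d) : ℝ :=
  (∑ I : Fin n, ∑ a : Fin d,
    (fderiv ℝ F x ((Pi.single I (Pi.single a 1), 0), (0, 0)) *
       fderiv ℝ G x ((0, Pi.single I (Pi.single a 1)), (0, 0)) -
     fderiv ℝ F x ((0, Pi.single I (Pi.single a 1)), (0, 0)) *
       fderiv ℝ G x ((Pi.single I (Pi.single a 1), 0), (0, 0)))) +
  ∑ I : Fin n,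
    (fderiv ℝ F x ((0, 0), (Pi.single I 1, 0)) *
       fderiv ℝ G x ((0, 0), (0, Pi.single I 1)) -
     fderiv ℝ F x ((0, 0), (0, Pi.single I 1)) *
       fderiv ℝ G x ((0, 0), (Pi.single I 1, 0)))

/-
The bracket {f, C_J} is the derivative of f along the Hamiltonian vector field of C_J. Write
c := φ̂(e_J) = `centered (Pi.single J 1)`, so c_I = δ_IJ - 1/n. The flow of that field multiplies
q_I by e^{-t c_I} and p_I by e^{t c_I}, and shifts φ_J by t. The shift moves φ̂_I by exactly t c_I,
so Q_I = e^{φ̂_I} q_I and Π_I = e^{-φ̂_I} p_I are constant along the flow, hence so is f = g(Q, Π),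
and its derivative along the flow vanishes.
-/

theorem fderiv_apply_eq_zero_of_forall_comp_eq {𝕜 E F : Type*} [NontriviallyNormedField 𝕜]
    [NormedAddCommGroup E] [NormedSpace 𝕜 E] [NormedAddCommGroup F] [NormedSpace 𝕜 F]
    {f : E → F} {γ : 𝕜 → E} {x v : E} (hf : DifferentiableAt 𝕜 f x) (hγ : HasDerivAt γ v 0)
    (hγ0 : γ 0 = x) (hconst : ∀ t, f (γ t) = f x) : fderiv 𝕜 f x v = 0 := by
  subst hγ0
  have hcomp := hf.hasFDerivAt.comp_hasDerivAt 0 hγ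
  rw [show f ∘ γ = fun _ => f (γ 0) from funext hconst] at hcomp
  exact hcomp.unique (hasDerivAt_const 0 _)

namespace ExtPhase

variable {n d : ℕ}

def qDir (I : Fin n) (a : Fin d) : ExtPhase n d := ((Pi.single I (Pi.single a 1), 0), (0, 0))
def pDir (I : Fin n) (a : Fin d) : ExtPhase n d := ((0, Pi.single I (Pi.single a 1)), (0, 0))
def φDir (I : Fin n) : ExtPhase n d := ((0, 0), (Pi.single I 1, 0))
def πDir (I : Fin n) : ExtPhase n d := ((0, 0), (0, Pi.single I 1))

theorem eq_sum_dirs (v : ExtPhase n d) :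
    v = ∑ I, ∑ a, (v.1.1 I a • qDir I a + v.1.2 I a • pDir I a) +
      ∑ I, (v.2.1 I • φDir I + v.2.2 I • πDir I) := by
  ext <;> simp [qDir, pDir, φDir, πDir, Prod.fst_sum, Prod.snd_sum, Finset.sum_apply,
    Pi.single_apply]

theorem apply_eq_sum_dirs (L : ExtPhase n d →L[ℝ] ℝ) (v : ExtPhase n d) :
    L v = ∑ I, ∑ a, (v.1.1 I a * L (qDir I a) + v.1.2 I a * L (pDir I a)) +
      ∑ I, (v.2.1 I * L (φDir I) + v.2.2 I * L (πDir I)) := by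
  conv_lhs => rw [eq_sum_dirs v]
  simp only [map_add, map_sum, map_smul, smul_eq_mul]

noncomputable def hamiltonianVector (G : ExtPhase n d → ℝ) (x : ExtPhase n d) : ExtPhase n d :=
  ((fun I a => fderiv ℝ G x (pDir I a), fun I a => -fderiv ℝ G x (qDir I a)),
   (fun I => fderiv ℝ G x (πDir I), fun I => -fderiv ℝ G x (φDir I)))

theorem extPB_eq_fderiv_hamiltonianVector (F G : ExtPhase n d → ℝ) (x : ExtPhase n d) :
    extPB F G x = fderiv ℝ F x (hamiltonianVector G x) := by
  rw [apply_eq_sum_dirs]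
  simp only [extPB, hamiltonianVector, qDir, pDir, φDir, πDir]
  congr 1
  · exact Finset.sum_congr rfl fun I _ => Finset.sum_congr rfl fun a _ => by ring
  · exact Finset.sum_congr rfl fun I _ => by ring

open ContinuousLinearMap in
noncomputable def qCoord (I : Fin n) (a : Fin d) : ExtPhase n d →L[ℝ] ℝ :=
  (proj a : (Fin d → ℝ) →L[ℝ] ℝ).comp
    ((proj I : (Fin n → Fin d → ℝ) →L[ℝ] (Fin d → ℝ)).comp ((fst ℝ _ _).comp (fst ℝ _ _)))

open ContinuousLinearMap in
noncomputable def pCoord (I : Fin n) (a : Fin d) : ExtPhase n d →L[ℝ] ℝ :=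
  (proj a : (Fin d → ℝ) →L[ℝ] ℝ).comp
    ((proj I : (Fin n → Fin d → ℝ) →L[ℝ] (Fin d → ℝ)).comp ((snd ℝ _ _).comp (fst ℝ _ _)))

open ContinuousLinearMap in
noncomputable def πCoord (I : Fin n) : ExtPhase n d →L[ℝ] ℝ :=
  (proj I : (Fin n → ℝ) →L[ℝ] ℝ).comp ((snd ℝ _ _).comp (snd ℝ _ _))

@[simp] theorem qCoord_apply (I : Fin n) (a : Fin d) (v : ExtPhase n d) :
    qCoord I a v = v.1.1 I a := rfl

@[simp] theorem pCoord_apply (I : Fin n) (a : Fin d) (v : ExtPhase n d) :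
    pCoord I a v = v.1.2 I a := rfl

@[simp] theorem πCoord_apply (I : Fin n) (v : ExtPhase n d) : πCoord I v = v.2.2 I := rfl

noncomputable def constraint (J : Fin n) (x : ExtPhase n d) : ℝ :=
  x.2.2 J - ((∑ a, x.1.2 J a * x.1.1 J a) -
    (1 / (n : ℝ)) * ∑ K, ∑ a, x.1.2 K a * x.1.1 K a)

theorem fderiv_constraint_apply (J : Fin n) (x v : ExtPhase n d) :
    fderiv ℝ (constraint J) x v = v.2.2 J -
      ((∑ a, (x.1.2 J a * v.1.1 J a + x.1.1 J a * v.1.2 J a)) -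
        (1 / (n : ℝ)) * ∑ K, ∑ a, (x.1.2 K a * v.1.1 K a + x.1.1 K a * v.1.2 K a)) := by
  have hpq : ∀ K a, HasFDerivAt (fun y : ExtPhase n d => y.1.2 K a * y.1.1 K a)
      (x.1.2 K a • qCoord K a + x.1.1 K a • pCoord K a) x := fun K a =>
    (pCoord K a).hasFDerivAt.mul (qCoord K a).hasFDerivAt
  have h : HasFDerivAt (constraint J) (πCoord J -
      (∑ a, (x.1.2 J a • qCoord J a + x.1.1 J a • pCoord J a) -
        (1 / (n : ℝ)) • ∑ K, ∑ a, (x.1.2 K a • qCoord K a + x.1.1 K a • pCoord K a))) x :=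
    (πCoord J).hasFDerivAt.sub ((HasFDerivAt.fun_sum fun a _ => hpq J a).sub
      ((HasFDerivAt.fun_sum fun K _ => HasFDerivAt.fun_sum fun a _ => hpq K a).const_mul _))
  rw [h.fderiv]
  simp

noncomputable def centered (φ : Fin n → ℝ) : Fin n → ℝ := fun I => φ I - (1 / (n : ℝ)) * ∑ J, φ J

theorem centered_add_smul (φ ψ : Fin n → ℝ) (t : ℝ) :
    centered (φ + t • ψ) = centered φ + t • centered ψ := by
  funext I
  simp only [centered, Pi.add_apply, Pi.smul_apply, smul_eq_mul, Finset.sum_add_distrib,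
    ← Finset.mul_sum]
  ring

noncomputable def constraintVector (J : Fin n) (x : ExtPhase n d) : ExtPhase n d :=
  ((fun I a => -(centered (Pi.single J 1) I * x.1.1 I a),
    fun I a => centered (Pi.single J 1) I * x.1.2 I a), (Pi.single J 1, 0))

theorem hamiltonianVector_constraint (J : Fin n) (x : ExtPhase n d) :
    hamiltonianVector (constraint J) x = constraintVector J x := by
  ext <;>
  simp only [hamiltonianVector, constraintVector, centered, fderiv_constraint_apply, qDir, pDir,
    φDir, πDir, Pi.zero_apply, Pi.single_apply, ite_apply, eq_comm, mul_ite, mul_one, mul_zero,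
    zero_add, add_zero, Finset.sum_ite_irrel, Finset.sum_ite_eq, Finset.mem_univ, ↓reduceIte,
    Finset.sum_const_zero, one_div, zero_sub, neg_sub, sub_self, sub_zero, neg_zero] <;>
  split_ifs with h <;> (try subst h) <;> ring

noncomputable def constraintFlow (J : Fin n) (t : ℝ) (x : ExtPhase n d) : ExtPhase n d :=
  ((fun I a => Real.exp (-(t * centered (Pi.single J 1) I)) * x.1.1 I a,
    fun I a => Real.exp (t * centered (Pi.single J 1) I) * x.1.2 I a),
   (x.2.1 + t • Pi.single J 1, x.2.2))

theorem constraintFlow_zero (J : Fin n) (x : ExtPhase n d) : constraintFlow J 0 x = x := by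
  simp [constraintFlow]

theorem hasDerivAt_constraintFlow (J : Fin n) (x : ExtPhase n d) :
    HasDerivAt (fun t => constraintFlow J t x) (constraintVector J x) 0 := by
  refine (HasDerivAt.prodMk ?_ ?_).prodMk (HasDerivAt.prodMk ?_ (hasDerivAt_const _ _))
  · refine hasDerivAt_pi.2 fun I => hasDerivAt_pi.2 fun a => ?_
    simpa using (((hasDerivAt_id (0 : ℝ)).mul_const (centered (Pi.single J 1) I)).neg.exp.mul_const
      (x.1.1 I a))
  · refine hasDerivAt_pi.2 fun I => hasDerivAt_pi.2 fun a => ?_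
    simpa using (((hasDerivAt_id (0 : ℝ)).mul_const (centered (Pi.single J 1) I)).exp.mul_const
      (x.1.2 I a))
  · simpa using ((hasDerivAt_id (0 : ℝ)).smul_const (Pi.single J (1 : ℝ))).const_add x.2.1

noncomputable def rescaledCoords (x : ExtPhase n d) : (Fin n → Fin d → ℝ) × (Fin n → Fin d → ℝ) :=
  (fun I a => Real.exp (centered x.2.1 I) * x.1.1 I a,
   fun I a => Real.exp (-centered x.2.1 I) * x.1.2 I a)

theorem rescaledCoords_constraintFlow (J : Fin n) (t : ℝ) (x : ExtPhase n d) :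
    rescaledCoords (constraintFlow J t x) = rescaledCoords x := by
  simp only [rescaledCoords, constraintFlow, centered_add_smul, Pi.add_apply, Pi.smul_apply,
    smul_eq_mul]
  ext I a <;> simp only [← mul_assoc, ← Real.exp_add] <;> ring_nf

theorem differentiable_rescaledCoords : Differentiable ℝ (rescaledCoords : ExtPhase n d → _) := by
  unfold rescaledCoords centered
  fun_prop

end ExtPhase

theorem transformed_functions_commute_with_C_general (n d : ℕ)
    (g : (Fin n → Fin d → ℝ) × (Fin n → Fin d → ℝ) → ℝ)
    (hg : Differentiable ℝ g)
    (φhat : (Fin n → ℝ) → Fin n → ℝ)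
    (hφhat : φhat = fun φ I => φ I - (1 / (n : ℝ)) * ∑ J : Fin n, φ J)
    (f : ExtPhase n d → ℝ)
    (hf : f = fun x => g (fun I a => Real.exp (φhat x.2.1 I) * x.1.1 I a,
                          fun I a => Real.exp (-(φhat x.2.1 I)) * x.1.2 I a))
    (C : Fin n → ExtPhase n d → ℝ)
    (hC : C = fun J x => x.2.2 J -
      ((∑ a : Fin d, x.1.2 J a * x.1.1 J a) -
        (1 / (n : ℝ)) * ∑ K : Fin n, ∑ a : Fin d, x.1.2 K a * x.1.1 K a)) :
    ∀ (J : Fin n) (x : ExtPhase n d), extPB f (C J) x = 0 := by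
  intro J x
  have hf' : f = g ∘ ExtPhase.rescaledCoords := by subst hf hφhat; rfl
  have hC' : C J = ExtPhase.constraint J := by subst hC; rfl
  rw [hC', ExtPhase.extPB_eq_fderiv_hamiltonianVector, ExtPhase.hamiltonianVector_constraint, hf']
  refine fderiv_apply_eq_zero_of_forall_comp_eq
    ((hg _).comp x (ExtPhase.differentiable_rescaledCoords x))
    (ExtPhase.hasDerivAt_constraintFlow J x) (ExtPhase.constraintFlow_zero J x) fun t => ?_
  rw [Function.comp_apply, Function.comp_apply, ExtPhase.rescaledCoords_constraintFlow]

/-- any smooth function f depending on phase space only through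
Q_I = e^{φ̂_I} q_I and P_I = e^{−φ̂_I} p_I Poisson-commutes with the
constraints C_J = π_φ^J − (p_J·q_J − ⟨p·q⟩). -/
theorem transformed_functions_commute_with_C (n d : ℕ) (hn : 1 ≤ n)
    (g : (Fin n → Fin d → ℝ) × (Fin n → Fin d → ℝ) → ℝ)
    (hg : Differentiable ℝ g)
    (φhat : (Fin n → ℝ) → Fin n → ℝ)
    (hφhat : φhat = fun φ I => φ I - (1 / (n : ℝ)) * ∑ J : Fin n, φ J)
    (f : ExtPhase n d → ℝ)
    (hf : f = fun x => g (fun I a => Real.exp (φhat x.2.1 I) * x.1.1 I a,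
                          fun I a => Real.exp (-(φhat x.2.1 I)) * x.1.2 I a))
    (C : Fin n → ExtPhase n d → ℝ)
    (hC : C = fun J x => x.2.2 J -
      ((∑ a : Fin d, x.1.2 J a * x.1.1 J a) -
        (1 / (n : ℝ)) * ∑ K : Fin n, ∑ a : Fin d, x.1.2 K a * x.1.1 K a)) :
    ∀ (J : Fin n) (x : ExtPhase n d), extPB f (C J) x = 0 :=
  transformed_functions_commute_with_C_general n d g hg φhat hφhat f hf C hC
end

section
/- The Poisson bracket {Tχ(f), π_φ(α)} for the transformed single-particle constraints evaluates to ∑_J [⟨α_J f_J(π_J² + |k|q_J²)⟩ − α_J f_J(π_J² + |k|q_J²)] at φ = 0; in particular at φ = 0 it vanishes for all choices α of mean-zero coefficient vectors iff f_J(‖π_J‖² + |k|‖q_J‖²) is independent of J. -/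
open Finset

section Smearing

variable {ι : Type*} [Fintype ι] [DecidableEq ι]

theorem sum_sum_mul_mul_sub_ite (f g α : ι → ℝ) (m : ℝ) :
    ∑ I, ∑ J, f I * α J * (g I * (m - if I = J then 1 else 0)) =
      ∑ J, α J * (m * ∑ K, f K * g K - f J * g J) := by
  rw [sum_comm]
  refine sum_congr rfl fun J _ => ?_
  simp only [mul_sub, sum_sub_distrib, mul_ite, mul_one, mul_zero, sum_ite_eq', mem_univ, if_true,
    mul_sum]
  congr 1
  · exact sum_congr rfl fun I _ => by ring
  · ring

theorem forall_sum_mul_mean_sub_eq_zero_iff (g : ι → ℝ) :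
    (∀ α : ι → ℝ, ∑ J, α J * ((1 / (Fintype.card ι : ℝ)) * ∑ K, g K - g J) = 0) ↔
      ∃ c, ∀ J, g J = c := by
  constructor
  · intro h
    refine ⟨(1 / (Fintype.card ι : ℝ)) * ∑ K, g K, fun J => ?_⟩
    have hJ := h (Pi.single J 1)
    simp only [Pi.single_apply, ite_mul, one_mul, zero_mul, sum_ite_eq', mem_univ, if_true] at hJ
    linarith
  · rintro ⟨c, hc⟩ α
    refine sum_eq_zero fun J _ => ?_
    have : Nonempty ι := ⟨J⟩
    simp [hc]

end Smearing

theorem extPB_piPhi_eq_fderiv {n d : ℕ} (F : ExtPhase n d → ℝ) (x : ExtPhase n d) (J : Fin n) :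
    extPB F (fun y => y.2.2 J) x = fderiv ℝ F x ((0, 0), (Pi.single J 1, 0)) := by
  have hπ : ∀ v, fderiv ℝ (fun y : ExtPhase n d => y.2.2 J) x v = v.2.2 J := fun v => by
    rw [fderiv_apply (by fun_prop) J, fderiv.snd differentiableAt_snd, fderiv_snd]
    rfl
  simp [extPB, hπ, Pi.single_apply]

theorem hasDerivAt_half_exp_sub_exp (c P R : ℝ) :
    HasDerivAt (fun t : ℝ => 1 / 2 * (Real.exp (-2 * (t * c)) * P - Real.exp (2 * (t * c)) * R))
      (-((P + R) * c)) 0 := by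
  have h := (((((hasDerivAt_id (0 : ℝ)).mul_const c).const_mul (-2)).exp.mul_const P).sub
    ((((hasDerivAt_id (0 : ℝ)).mul_const c).const_mul 2).exp.mul_const R)).const_mul (1 / 2 : ℝ)
  exact h.congr_deriv (by simp; ring)

theorem hasLineDerivAt_transformedConstraint_phi {n d : ℕ} (κ : ℝ) (x : ExtPhase n d)
    (hx : x.2.1 = 0) (I J : Fin n) :
    HasLineDerivAt ℝ (fun y : ExtPhase n d => 1 / 2 *
      (Real.exp (-2 * (y.2.1 I - 1 / (n : ℝ) * ∑ K : Fin n, y.2.1 K)) * ∑ a : Fin d, y.1.2 I a ^ 2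
        - Real.exp (2 * (y.2.1 I - 1 / (n : ℝ) * ∑ K : Fin n, y.2.1 K)) *
          (κ * ∑ a : Fin d, y.1.1 I a ^ 2)))
      (-((∑ a : Fin d, x.1.2 I a ^ 2 + κ * ∑ a : Fin d, x.1.1 I a ^ 2) *
        ((if I = J then 1 else 0) - 1 / n)))
      x ((0, 0), (Pi.single J 1, 0)) := by
  refine (hasDerivAt_half_exp_sub_exp _ _ _).congr_of_eventuallyEq
    (Filter.Eventually.of_forall fun t => ?_)
  simp [hx, Pi.single_apply, mul_sub, mul_comm]

theorem smeared_bracket_formula_general (n d : ℕ)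
    (k : ℝ)
    (φhat : (Fin n → ℝ) → Fin n → ℝ)
    (hφhat : φhat = fun φ I => φ I - (1 / (n : ℝ)) * ∑ J : Fin n, φ J)
    (Tχ : Fin n → ExtPhase n d → ℝ)
    (hTχ : Tχ = fun I x => (1 / 2 : ℝ) *
      (Real.exp (-2 * φhat x.2.1 I) * (∑ a : Fin d, x.1.2 I a ^ 2)
        - Real.exp (2 * φhat x.2.1 I) * (|k| * ∑ a : Fin d, x.1.1 I a ^ 2)))
    (x : ExtPhase n d) (hx : x.2.1 = 0)
    (A : Fin n → ℝ)
    (hA : A = fun J => (∑ a : Fin d, x.1.2 J a ^ 2) + |k| * ∑ a : Fin d, x.1.1 J a ^ 2)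
    (B : (Fin n → ℝ) → (Fin n → ℝ) → ℝ)
    (hB : B = fun f α => ∑ I : Fin n, ∑ J : Fin n,
      f I * α J * extPB (Tχ I) (fun y => y.2.2 J) x) :
    (∀ f α : Fin n → ℝ,
      B f α = ∑ J : Fin n, α J * ((1 / (n : ℝ)) * (∑ K : Fin n, f K * A K) - f J * A J)) ∧
    (∀ f : Fin n → ℝ,
      (∀ α : Fin n → ℝ, B f α = 0) ↔ ∃ c : ℝ, ∀ J : Fin n, f J * A J = c) := by
  have hbracket : ∀ I J : Fin n, extPB (Tχ I) (fun y => y.2.2 J) x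
      = A I * (1 / n - if I = J then 1 else 0) := by
    intro I J
    subst hφhat hTχ hA
    beta_reduce
    rw [extPB_piPhi_eq_fderiv, ← DifferentiableAt.lineDeriv_eq_fderiv (by fun_prop),
      (hasLineDerivAt_transformedConstraint_phi |k| x hx I J).lineDeriv]
    ring
  have hformula : ∀ f α : Fin n → ℝ,
      B f α = ∑ J : Fin n, α J * ((1 / (n : ℝ)) * (∑ K : Fin n, f K * A K) - f J * A J) := by
    intro f α
    simp only [hB, hbracket]
    exact sum_sum_mul_mul_sub_ite f A α _
  refine ⟨hformula, fun f => ?_⟩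
  simpa [hformula] using forall_sum_mul_mean_sub_eq_zero_iff fun J => f J * A J

/-- at φ = 0, the smeared bracket B(f,α) = ∑_{I,J} f_I α_J {Tχ_I, π_φ^J}
equals ∑_J α_J (⟨f·A⟩ − f_J A_J) with A_J = ‖p_J‖² + |k|‖q_J‖², and it vanishes
for all α iff f_J A_J is independent of J. -/
theorem smeared_bracket_formula (n d : ℕ) (hn : 1 ≤ n) (hd : 1 ≤ d)
    (k : ℝ) (hk : k ≠ 0)
    (φhat : (Fin n → ℝ) → Fin n → ℝ)
    (hφhat : φhat = fun φ I => φ I - (1 / (n : ℝ)) * ∑ J : Fin n, φ J)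
    (Tχ : Fin n → ExtPhase n d → ℝ)
    (hTχ : Tχ = fun I x => (1 / 2 : ℝ) *
      (Real.exp (-2 * φhat x.2.1 I) * (∑ a : Fin d, x.1.2 I a ^ 2)
        - Real.exp (2 * φhat x.2.1 I) * (|k| * ∑ a : Fin d, x.1.1 I a ^ 2)))
    (x : ExtPhase n d) (hx : x.2.1 = 0)
    (A : Fin n → ℝ)
    (hA : A = fun J => (∑ a : Fin d, x.1.2 J a ^ 2) + |k| * ∑ a : Fin d, x.1.1 J a ^ 2)
    (B : (Fin n → ℝ) → (Fin n → ℝ) → ℝ)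
    (hB : B = fun f α => ∑ I : Fin n, ∑ J : Fin n,
      f I * α J * extPB (Tχ I) (fun y => y.2.2 J) x) :
    (∀ f α : Fin n → ℝ,
      B f α = ∑ J : Fin n, α J * ((1 / (n : ℝ)) * (∑ K : Fin n, f K * A K) - f J * A J)) ∧
    (∀ f : Fin n → ℝ,
      (∀ α : Fin n → ℝ, B f α = 0) ↔ ∃ c : ℝ, ∀ J : Fin n, f J * A J = c) :=
  smeared_bracket_formula_general n d k φhat hφhat Tχ hTχ x hx A hA B hB
end
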